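/- The Poincaré constant of the multislice equals 1: for the function f : Ω_κ → ℝ defined by f(ω) = 1 if ω_1 = 1 and f(ω) = 0 otherwise, one has Var_κ(f) = 𝔈_κ(f, f) > 0; consequently, any τ ∈ ℝ satisfying Var_κ(g) ≤ τ·𝔈_κ(g,g) for all g : Ω_κ → ℝ satisfies τ ≥ 1. -/

import Mathlib

open Finset

namespace Multislice

/-- The multislice `Ω_κ`: sequences of length `n` with values in `Fin L`
in which color `ℓ` appears exactly `κ ℓ` times. -/
def slice (L n : ℕ) (κ : Fin L → ℕ) : Finset (Fin n → Fin L) :=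
  Finset.univ.filter fun ω => ∀ ℓ, (Finset.univ.filter fun i => ω i = ℓ).card = κ ℓ

/-- Average of `f` with respect to the uniform distribution on `Ω`. -/
noncomputable def expect {L n : ℕ} (Ω : Finset (Fin n → Fin L))
    (f : (Fin n → Fin L) → ℝ) : ℝ :=
  (∑ ω ∈ Ω, f ω) / Ω.card

/-- Discrete gradient `(∇^{ij} f)(ω) = f(ω^{ij}) - f(ω)`. -/
noncomputable def grad {L n : ℕ} (i j : Fin n) (f : (Fin n → Fin L) → ℝ)
    (ω : Fin n → Fin L) : ℝ :=
  f (ω ∘ Equiv.swap i j) - f ω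

/-- The Dirichlet form `𝔈_κ(f,g) = (1/(2n)) Σ_{i<j} E[(∇^{ij}f)(∇^{ij}g)]`. -/
noncomputable def dirichlet {L n : ℕ} (Ω : Finset (Fin n → Fin L))
    (f g : (Fin n → Fin L) → ℝ) : ℝ :=
  (1 / (2 * (n : ℝ))) *
    ∑ p ∈ Finset.univ.filter (fun p : Fin n × Fin n => p.1 < p.2),
      expect Ω fun ω => grad p.1 p.2 f ω * grad p.1 p.2 g ω

/-- The weighted Dirichlet form `𝔈^G_κ(f,g) = (1/2) Σ_{i<j} G_{ij} E[(∇^{ij}f)(∇^{ij}g)]`. -/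
noncomputable def wDirichlet {L n : ℕ} (G : Fin n → Fin n → ℝ)
    (Ω : Finset (Fin n → Fin L)) (f g : (Fin n → Fin L) → ℝ) : ℝ :=
  (1 / 2) *
    ∑ p ∈ Finset.univ.filter (fun p : Fin n × Fin n => p.1 < p.2),
      G p.1 p.2 * expect Ω fun ω => grad p.1 p.2 f ω * grad p.1 p.2 g ω

/-- Entropy `Ent(f) = E[f log f] - E[f] log E[f]` (note `Real.log 0 = 0`). -/
noncomputable def entropy {L n : ℕ} (Ω : Finset (Fin n → Fin L))
    (f : (Fin n → Fin L) → ℝ) : ℝ :=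
  expect Ω (fun ω => f ω * Real.log (f ω)) - expect Ω f * Real.log (expect Ω f)

/-- Variance `Var(f) = E[f²] - (E[f])²`. -/
noncomputable def variance {L n : ℕ} (Ω : Finset (Fin n → Fin L))
    (f : (Fin n → Fin L) → ℝ) : ℝ :=
  expect Ω (fun ω => f ω ^ 2) - (expect Ω f) ^ 2

/-- The edge boundary `∂A` of `A ⊆ Ω`: edges (recorded as pairs with first endpoint
in `A` and second endpoint in `Ω \ A`) between `A` and its complement, where two
states are adjacent when they differ in exactly two coordinates. -/
def edgeBoundary {L n : ℕ} (Ω A : Finset (Fin n → Fin L)) :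
    Finset ((Fin n → Fin L) × (Fin n → Fin L)) :=
  (A ×ˢ (Ω \ A)).filter fun p => (Finset.univ.filter fun i => p.1 i ≠ p.2 i).card = 2

/-- The `ℓ`-colored region `ξ_ℓ(ω) = {i : ω i = ℓ}`. -/
def xi {L n : ℕ} (ℓ : Fin L) (ω : Fin n → Fin L) : Finset (Fin n) :=
  Finset.univ.filter fun i => ω i = ℓ

/-- The parameter `κ^{∖ℓ}` obtained from `κ` by removing the `ℓ`-th entry. -/
def removeIdx {L : ℕ} (κ : Fin L → ℕ) (ℓ : Fin L) (m : Fin (L - 1)) : ℕ :=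
  if (m : ℕ) < (ℓ : ℕ) then κ ⟨m, by have := m.isLt; omega⟩
  else κ ⟨(m : ℕ) + 1, by have := m.isLt; omega⟩

/-!
Let `f` be the indicator of `{ω | ω k = c}` and `p = κ c / n`. The multislice is invariant under
permuting coordinates, so all `E[1{ω j = c}]` agree; they sum to `κ c`, hence `E f = p` and
`Var f = p (1 - p)`. Summing the Dirichlet form over ordered pairs, only the transpositions moving
`k` change `f`, each contributing `(f_j - f_k)²`; since exactly `κ c` coordinates of `ω` have
color `c`, `∑ j, (f_j - f_k)² = κ c + (n - 2 κ c) f_k`, and taking expectations gives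
`𝔈(f, f) = p (1 - p)`. This is positive because another color occurs, so `f` forces every
Poincaré constant to be `≥ 1`.
-/

end Multislice

theorem two_nsmul_sum_lt_eq_sum_sum {α M : Type*} [Fintype α] [LinearOrder α]
    [AddCommMonoid M] (F : α → α → M) (hsymm : ∀ i j, F i j = F j i) (hdiag : ∀ i, F i i = 0) :
    2 • ∑ p ∈ univ.filter (fun p : α × α => p.1 < p.2), F p.1 p.2 = ∑ i, ∑ j, F i j := by
  have hgt : ∑ p ∈ univ.filter (fun p : α × α => p.2 < p.1), F p.1 p.2
      = ∑ p ∈ univ.filter (fun p : α × α => p.1 < p.2), F p.1 p.2 :=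
    Finset.sum_equiv (Equiv.prodComm α α) (by simp) (fun p _ => hsymm _ _)
  have hne : ∑ p ∈ univ.filter (fun p : α × α => p.1 ≠ p.2), F p.1 p.2 = ∑ i, ∑ j, F i j := by
    rw [Finset.sum_filter_of_ne, Fintype.sum_prod_type]
    rintro ⟨i, j⟩ - h (hij : i = j)
    exact h (hij ▸ hdiag i)
  rw [← hne, two_nsmul]
  nth_rw 1 [← hgt]
  rw [← Finset.sum_union (Finset.disjoint_filter.mpr fun _ _ h h' => lt_asymm h h')]
  congr 1
  ext p
  simp only [Finset.mem_union, Finset.mem_filter, Finset.mem_univ, true_and]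
  exact or_comm.trans lt_or_lt_iff_ne

open scoped BigOperators

namespace Multislice

def coordIndicator {L n : ℕ} (i : Fin n) (c : Fin L) (ω : Fin n → Fin L) : ℝ :=
  if ω i = c then 1 else 0

section
variable {L n : ℕ} {κ : Fin L → ℕ}

theorem expect_eq_finsetExpect (Ω : Finset (Fin n → Fin L)) (f : (Fin n → Fin L) → ℝ) :
    expect Ω f = 𝔼 ω ∈ Ω, f ω :=
  (Finset.expect_eq_sum_div_card Ω f).symm

theorem slice_nonempty (hn : n = ∑ ℓ, κ ℓ) : (slice L n κ).Nonempty := by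
  subst hn
  refine ⟨fun i => (finSigmaFinEquiv.symm i).1, ?_⟩
  simp only [slice, Finset.mem_filter, Finset.mem_univ, true_and]
  intro ℓ
  rw [Finset.card_filter, ← finSigmaFinEquiv.sum_comp, Fintype.sum_sigma]
  simp

theorem comp_perm_mem_slice {ω : Fin n → Fin L} (hω : ω ∈ slice L n κ)
    (π : Equiv.Perm (Fin n)) : ω ∘ π ∈ slice L n κ := by
  simp only [slice, Finset.mem_filter, Finset.mem_univ, true_and] at hω ⊢
  intro ℓ
  rw [← hω ℓ]
  exact Finset.card_nbij' π π.symm (fun _ => by simp) (fun _ => by simp) (fun _ _ => by simp)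
    (fun _ _ => by simp)

theorem expect_comp_perm (π : Equiv.Perm (Fin n)) (g : (Fin n → Fin L) → ℝ) :
    expect (slice L n κ) (fun ω => g (ω ∘ π)) = expect (slice L n κ) g := by
  simp only [expect_eq_finsetExpect]
  exact Finset.expect_nbij' (· ∘ π) (· ∘ π.symm) (fun ω hω => comp_perm_mem_slice hω π)
    (fun ω hω => comp_perm_mem_slice hω π.symm) (by simp [Function.comp_assoc])
    (by simp [Function.comp_assoc]) (fun _ _ => rfl)

theorem sum_coordIndicator_of_mem_slice {ω : Fin n → Fin L} (hω : ω ∈ slice L n κ) (c : Fin L) :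
    ∑ j, coordIndicator j c ω = κ c := by
  simp only [slice, Finset.mem_filter, Finset.mem_univ, true_and] at hω
  simp [coordIndicator, Finset.sum_boole, hω c]

theorem coordIndicator_sq (i : Fin n) (c : Fin L) (ω : Fin n → Fin L) :
    coordIndicator i c ω ^ 2 = coordIndicator i c ω := by
  unfold coordIndicator
  split_ifs <;> norm_num

theorem expect_coordIndicator (hn : n = ∑ ℓ, κ ℓ) (i : Fin n) (c : Fin L) :
    expect (slice L n κ) (coordIndicator i c) = κ c / n := by
  have hsymm : ∀ j, expect (slice L n κ) (coordIndicator j c)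
      = expect (slice L n κ) (coordIndicator i c) := fun j => by
    rw [← expect_comp_perm (Equiv.swap i j)]
    congr 1
    funext ω
    simp [coordIndicator]
  have hsum : ∑ j, expect (slice L n κ) (coordIndicator j c) = κ c := by
    simp only [expect_eq_finsetExpect]
    rw [← Finset.expect_sum_comm,
      Finset.expect_congr rfl fun ω hω => sum_coordIndicator_of_mem_slice hω c,
      Finset.expect_const (slice_nonempty hn)]
  rw [Finset.sum_congr rfl fun j _ => hsymm j, Finset.sum_const, Finset.card_univ,
    Fintype.card_fin, nsmul_eq_mul] at hsum
  have hn0 : (n : ℝ) ≠ 0 := by exact_mod_cast i.pos.ne'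
  rw [eq_div_iff hn0, ← hsum, mul_comm]

theorem variance_coordIndicator (hn : n = ∑ ℓ, κ ℓ) (i : Fin n) (c : Fin L) :
    variance (slice L n κ) (coordIndicator i c) = κ c / n * (1 - κ c / n) := by
  simp only [variance, coordIndicator_sq, expect_coordIndicator hn]
  ring

theorem dirichlet_eq_sum_sum (Ω : Finset (Fin n → Fin L)) (f g : (Fin n → Fin L) → ℝ) :
    dirichlet Ω f g
      = 1 / (4 * n) * ∑ i, ∑ j, expect Ω fun ω => grad i j f ω * grad i j g ω := by
  rw [← two_nsmul_sum_lt_eq_sum_sum _ (fun i j => by simp only [grad, Equiv.swap_comm])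
    (fun i => by simp [grad, expect]), dirichlet, two_nsmul]
  ring

theorem sum_sum_sq_grad_coordIndicator (k : Fin n) (c : Fin L) (ω : Fin n → Fin L) :
    ∑ i, ∑ j, grad i j (coordIndicator k c) ω ^ 2
      = 2 * ∑ j, (coordIndicator j c ω - coordIndicator k c ω) ^ 2 := by
  set h : Fin n → ℝ := fun m => (coordIndicator m c ω - coordIndicator k c ω) ^ 2
  have hk : h k = 0 := by simp [h]
  have hrow : ∀ i, ∑ j, grad i j (coordIndicator k c) ω ^ 2
      = h i + if i = k then ∑ j, h j else 0 := fun i => by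
    change ∑ j, h (Equiv.swap i j k) = _
    by_cases hik : i = k
    · subst hik
      simp [hk]
    · rw [Fintype.sum_eq_single k fun j hjk => by
        rw [Equiv.swap_apply_of_ne_of_ne (Ne.symm hik) (Ne.symm hjk), hk]]
      simp [hik]
  simp only [hrow, Finset.sum_add_distrib, Finset.sum_ite_eq', Finset.mem_univ, if_true]
  ring

theorem sum_sq_sub_coordIndicator_of_mem_slice {ω : Fin n → Fin L} (hω : ω ∈ slice L n κ)
    (k : Fin n) (c : Fin L) :
    ∑ j, (coordIndicator j c ω - coordIndicator k c ω) ^ 2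
      = κ c + n * coordIndicator k c ω - 2 * κ c * coordIndicator k c ω := by
  simp only [sub_sq, coordIndicator_sq, Finset.sum_add_distrib, Finset.sum_sub_distrib,
    ← Finset.sum_mul, ← Finset.mul_sum, sum_coordIndicator_of_mem_slice hω, Finset.sum_const,
    Finset.card_univ, Fintype.card_fin, nsmul_eq_mul]
  ring

theorem dirichlet_coordIndicator (hn : n = ∑ ℓ, κ ℓ) (k : Fin n) (c : Fin L) :
    dirichlet (slice L n κ) (coordIndicator k c) (coordIndicator k c)
      = κ c / n * (1 - κ c / n) := by
  have hpt : ∀ ω ∈ slice L n κ,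
      ∑ i, ∑ j, grad i j (coordIndicator k c) ω * grad i j (coordIndicator k c) ω
        = 2 * (κ c + n * coordIndicator k c ω - 2 * κ c * coordIndicator k c ω) := by
    intro ω hω
    simp only [← sq, sum_sum_sq_grad_coordIndicator, sum_sq_sub_coordIndicator_of_mem_slice hω]
  have hexp := expect_coordIndicator hn k c
  have hn0 : (n : ℝ) ≠ 0 := by exact_mod_cast k.pos.ne'
  simp only [dirichlet_eq_sum_sum, expect_eq_finsetExpect] at hexp ⊢
  simp only [← Finset.expect_sum_comm]
  rw [Finset.expect_congr rfl hpt, ← Finset.mul_expect, Finset.expect_sub_distrib,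
    Finset.expect_add_distrib, ← Finset.mul_expect, ← Finset.mul_expect, hexp,
    Finset.expect_const (slice_nonempty hn)]
  field_simp
  ring

end

/-- the Poincaré constant of the multislice equals 1, as witnessed by
the indicator of `{ω : ω_1 = 1}`. -/
theorem multislice_poincare_sharp
    (L : ℕ) (hL : 2 ≤ L) (κ : Fin L → ℕ) (hκ : ∀ ℓ, 0 < κ ℓ)
    (n : ℕ) (hn : n = ∑ ℓ, κ ℓ) (hn0 : 0 < n) :
    (variance (slice L n κ)
        (fun ω => if ω ⟨0, hn0⟩ = (⟨0, by omega⟩ : Fin L) then (1 : ℝ) else 0) =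
      dirichlet (slice L n κ)
        (fun ω => if ω ⟨0, hn0⟩ = (⟨0, by omega⟩ : Fin L) then (1 : ℝ) else 0)
        (fun ω => if ω ⟨0, hn0⟩ = (⟨0, by omega⟩ : Fin L) then (1 : ℝ) else 0)) ∧
    (0 < dirichlet (slice L n κ)
        (fun ω => if ω ⟨0, hn0⟩ = (⟨0, by omega⟩ : Fin L) then (1 : ℝ) else 0)
        (fun ω => if ω ⟨0, hn0⟩ = (⟨0, by omega⟩ : Fin L) then (1 : ℝ) else 0)) ∧
    ∀ τ : ℝ, (∀ g : (Fin n → Fin L) → ℝ,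
        variance (slice L n κ) g ≤ τ * dirichlet (slice L n κ) g g) → 1 ≤ τ := by
  set c₀ : Fin L := ⟨0, by omega⟩
  set f : (Fin n → Fin L) → ℝ := coordIndicator ⟨0, hn0⟩ c₀
  have hV : variance (slice L n κ) f = κ c₀ / n * (1 - κ c₀ / n) := variance_coordIndicator hn _ _
  have hD : dirichlet (slice L n κ) f f = κ c₀ / n * (1 - κ c₀ / n) :=
    dirichlet_coordIndicator hn _ _
  have hκn : κ c₀ < n := hn ▸ Finset.single_lt_sum (j := ⟨1, hL⟩) (by simp [c₀]) (mem_univ _)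
    (mem_univ _) (hκ _) fun _ _ _ => Nat.zero_le _
  have hpos : 0 < κ c₀ / n * (1 - κ c₀ / n : ℝ) := by
    have hn' : (0 : ℝ) < n := by exact_mod_cast hn0
    refine mul_pos (div_pos (by exact_mod_cast hκ c₀) hn') (sub_pos.mpr ?_)
    exact (div_lt_one hn').mpr (by exact_mod_cast hκn)
  refine ⟨hV.trans hD.symm, hD ▸ hpos, fun τ hτ => ?_⟩
  have hf := hτ f
  rw [hV, hD] at hf
  exact le_of_mul_le_mul_right (by simpa using hf) hpos

end Multislice
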